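/- Let λ ∈ ℂ, α ∈ ℝ, and let φ₋, φ₊ : ℝ → ℂ be continuous. Let M, N_P, N_R, N_T be the fundamental solutions of the ZS system at, respectively, (λ, (φ₋, φ₊)), (-λ, (φ₊, φ₋)), (λ, (e^{iα}·φ₋, e^{-iα}·φ₊)), and (-λ, (x ↦ φ₋(1-x), x ↦ φ₊(1-x))). Then trace(N_P(1)) = trace(M(1)), trace(N_R(1)) = trace(M(1)), and trace(N_T(1)) = trace(M(1)); that is, the discriminant satisfies Δ(λ, φ) = Δ(-λ, Pφ) = Δ(λ, R_αφ) = Δ(-λ, Tφ). -/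

import Mathlib

/-!
Each transformed potential gives a system whose coefficient matrix is intertwined with the
original one by a constant invertible matrix: `!![0, 1; -1, 0]` for `P`, a diagonal phase for
`R_α`, and `!![1, 0; 0, -1]` together with `x ↦ 1 - x` for `T`. By uniqueness of fundamental
solutions, the new monodromy matrix is then a conjugate of `M 1` (for `T`, of
`(M 1)⁻¹ = adjugate (M 1)`), which has the same trace. Uniqueness needs no regularity of the
potentials: for traceless coefficients, `adjugate V * U` is constant for any two solutions.
-/

open Complex Matrix

/-- `M` is the fundamental solution of the Zakharov–Shabat system at `(lam, (p, q))`: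
`M' = !![-i lam, i p; -i q, i lam] * M`, `M 0 = 1`. -/
def IsZSFund (lam : ℂ) (p q : ℝ → ℂ) (M : ℝ → Matrix (Fin 2) (Fin 2) ℂ) : Prop :=
  M 0 = 1 ∧ ∀ (x : ℝ) (i j : Fin 2), HasDerivAt (fun t => M t i j)
    ((!![-I * lam, I * p x; -I * q x, I * lam] * M x) i j) x

section LinearODE

variable {𝕜 : Type*} [RCLike 𝕜] {n : Type*} [Fintype n]

def SolvesLinearODE (A M : ℝ → Matrix n n 𝕜) : Prop :=
  ∀ (x : ℝ) (i j : n), HasDerivAt (fun t => M t i j) ((A x * M x) i j) x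

theorem hasDerivAt_matrix_mul_apply {U V : ℝ → Matrix n n 𝕜} {U' V' : Matrix n n 𝕜} {x : ℝ}
    (hU : ∀ i j, HasDerivAt (fun t => U t i j) (U' i j) x)
    (hV : ∀ i j, HasDerivAt (fun t => V t i j) (V' i j) x) (i j : n) :
    HasDerivAt (fun t => (U t * V t) i j) ((U' * V x + U x * V') i j) x := by
  simp only [mul_apply, Matrix.add_apply, ← Finset.sum_add_distrib]
  exact HasDerivAt.fun_sum fun k _ => (hU i k).mul (hV k j)

theorem SolvesLinearODE.conj {A B M : ℝ → Matrix n n 𝕜} (hM : SolvesLinearODE A M)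
    {C : Matrix n n 𝕜} (hC : ∀ x, C * A x = B x * C) (D : Matrix n n 𝕜) :
    SolvesLinearODE B (fun t => C * M t * D) := by
  intro x i j
  have hconst (E : Matrix n n 𝕜) (i j : n) :
      HasDerivAt (fun _ : ℝ => E i j) ((0 : Matrix n n 𝕜) i j) x :=
    hasDerivAt_const x (E i j)
  convert hasDerivAt_matrix_mul_apply
    (hasDerivAt_matrix_mul_apply (hconst C) (hM x)) (hconst D) i j using 2
  simp [← Matrix.mul_assoc, hC x]

theorem SolvesLinearODE.comp_const_sub {A M : ℝ → Matrix n n 𝕜} (hM : SolvesLinearODE A M)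
    (c : ℝ) : SolvesLinearODE (fun x => -A (c - x)) (fun t => M (c - t)) := by
  intro x i j
  simpa only [Matrix.neg_mul, Matrix.neg_apply] using (hM (c - x) i j).comp_const_sub c x

end LinearODE

section TwoByTwo

variable {𝕜 : Type*} [RCLike 𝕜] {A B M N : ℝ → Matrix (Fin 2) (Fin 2) 𝕜}

theorem adjugate_eq_neg_of_trace_eq_zero {R : Type*} [CommRing R]
    {A : Matrix (Fin 2) (Fin 2) R} (h : trace A = 0) : adjugate A = -A := by
  rw [trace_fin_two] at h
  ext i j
  fin_cases i <;> fin_cases j <;> simp [adjugate_fin_two] <;> linear_combination h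

theorem trace_adjugate_fin_two {R : Type*} [CommRing R] (A : Matrix (Fin 2) (Fin 2) R) :
    trace (adjugate A) = trace A := by
  simp [adjugate_fin_two, trace_fin_two, add_comm]

theorem hasDerivAt_adjugate_apply_fin_two {V : ℝ → Matrix (Fin 2) (Fin 2) 𝕜}
    {V' : Matrix (Fin 2) (Fin 2) 𝕜} {x : ℝ}
    (hV : ∀ i j, HasDerivAt (fun t => V t i j) (V' i j) x) (i j : Fin 2) :
    HasDerivAt (fun t => adjugate (V t) i j) (adjugate V' i j) x := by
  fin_cases i <;> fin_cases j <;> simp only [adjugate_fin_two]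
  · exact hV 1 1
  · exact (hV 0 1).neg
  · exact (hV 1 0).neg
  · exact hV 0 0

/-- Since `adj (A V) = adj V * adj A = -adj V * A` for traceless `A`, the product
`adj V * U` has zero derivative. -/
theorem SolvesLinearODE.adjugate_mul_eq (hA : ∀ x, trace (A x) = 0)
    {U V : ℝ → Matrix (Fin 2) (Fin 2) 𝕜} (hU : SolvesLinearODE A U)
    (hV : SolvesLinearODE A V) (x : ℝ) :
    adjugate (V x) * U x = adjugate (V 0) * U 0 := by
  have hderiv (t : ℝ) (i j : Fin 2) :
      HasDerivAt (fun s => (adjugate (V s) * U s) i j) 0 t := by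
    convert hasDerivAt_matrix_mul_apply (hasDerivAt_adjugate_apply_fin_two (hV t)) (hU t) i j
    simp [adjugate_mul_distrib, adjugate_eq_neg_of_trace_eq_zero (hA t), Matrix.mul_assoc]
  ext i j
  exact is_const_of_deriv_eq_zero (fun t => (hderiv t i j).differentiableAt)
    (fun t => (hderiv t i j).deriv) x 0

theorem SolvesLinearODE.adjugate_mul_self (hA : ∀ x, trace (A x) = 0) (hM : SolvesLinearODE A M)
    (hM0 : M 0 = 1) (x : ℝ) : adjugate (M x) * M x = 1 := by
  rw [hM.adjugate_mul_eq hA hM x, hM0, adjugate_one, Matrix.one_mul]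

theorem SolvesLinearODE.eq_of_trace_eq_zero (hA : ∀ x, trace (A x) = 0)
    (hM : SolvesLinearODE A M) (hN : SolvesLinearODE A N)
    (hM0 : M 0 = 1) (hN0 : N 0 = 1) : M = N := by
  funext x
  have hNM : N x * adjugate (M x) = 1 := by
    rw [mul_eq_one_comm, hN.adjugate_mul_eq hA hM x, hM0, hN0, adjugate_one, Matrix.one_mul]
  calc M x = N x * adjugate (M x) * M x := by rw [hNM, Matrix.one_mul]
    _ = N x := by rw [Matrix.mul_assoc, hM.adjugate_mul_self hA hM0, Matrix.mul_one]

theorem SolvesLinearODE.trace_eq_of_intertwining (hB : ∀ x, trace (B x) = 0)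
    (hM : SolvesLinearODE A M) (hN : SolvesLinearODE B N)
    (hM0 : M 0 = 1) (hN0 : N 0 = 1) {C : Matrix (Fin 2) (Fin 2) 𝕜} (hC : IsUnit C.det)
    (hCA : ∀ x, C * A x = B x * C) (x : ℝ) : trace (N x) = trace (M x) := by
  have hconj := (hM.conj hCA C⁻¹).eq_of_trace_eq_zero hB hN
    (by rw [hM0, Matrix.mul_one, mul_nonsing_inv C hC]) hN0
  rw [← hconj, trace_mul_cycle, nonsing_inv_mul C hC, Matrix.one_mul]

theorem SolvesLinearODE.trace_eq_of_reflected_intertwining (hA : ∀ x, trace (A x) = 0)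
    (hB : ∀ x, trace (B x) = 0) (hM : SolvesLinearODE A M) (hN : SolvesLinearODE B N)
    (hM0 : M 0 = 1) (hN0 : N 0 = 1) (c : ℝ) {S : Matrix (Fin 2) (Fin 2) 𝕜} (hS : IsUnit S.det)
    (hSA : ∀ x, S * -A (c - x) = B x * S) : trace (N c) = trace (M c) := by
  have hMadj : M c * adjugate (M c) = 1 := mul_eq_one_comm.mp (hM.adjugate_mul_self hA hM0 c)
  have hreflect := ((hM.comp_const_sub c).conj hSA (adjugate (M c) * S⁻¹)).eq_of_trace_eq_zero
    hB hN (by rw [sub_zero, ← Matrix.mul_assoc, Matrix.mul_assoc S, hMadj, Matrix.mul_one,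
      mul_nonsing_inv S hS]) hN0
  have hNc : N c = S * M (c - c) * (adjugate (M c) * S⁻¹) := by rw [← hreflect]
  rw [hNc, sub_self, hM0, Matrix.mul_one, ← Matrix.mul_assoc, trace_mul_cycle,
    nonsing_inv_mul S hS, Matrix.one_mul, trace_adjugate_fin_two]

end TwoByTwo

section ZakharovShabat

def zsMatrix (lam : ℂ) (p q : ℝ → ℂ) (x : ℝ) : Matrix (Fin 2) (Fin 2) ℂ :=
  !![-I * lam, I * p x; -I * q x, I * lam]

variable {lam : ℂ} {p q : ℝ → ℂ}

theorem IsZSFund.solvesLinearODE {M : ℝ → Matrix (Fin 2) (Fin 2) ℂ} (hM : IsZSFund lam p q M) :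
    SolvesLinearODE (zsMatrix lam p q) M :=
  hM.2

theorem trace_zsMatrix (x : ℝ) : trace (zsMatrix lam p q x) = 0 := by
  simp [zsMatrix, trace_fin_two]

theorem zsMatrix_swap_intertwining (x : ℝ) :
    !![0, 1; -1, 0] * zsMatrix lam p q x = zsMatrix (-lam) q p x * !![0, 1; -1, 0] := by
  ext i j
  fin_cases i <;> fin_cases j <;> simp [zsMatrix]

theorem zsMatrix_phase_intertwining (α : ℝ) (x : ℝ) :
    !![exp (I * α / 2), 0; 0, exp (-(I * α / 2))] * zsMatrix lam p q x =
      zsMatrix lam (fun x => exp (I * α) * p x) (fun x => exp (-(I * α)) * q x) x *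
        !![exp (I * α / 2), 0; 0, exp (-(I * α / 2))] := by
  have hsq : exp (I * α) = exp (I * α / 2) ^ 2 := by rw [← exp_nat_mul]; ring_nf
  have hu : exp (I * α / 2) ≠ 0 := exp_ne_zero _
  ext i j
  fin_cases i <;> fin_cases j <;> simp [zsMatrix, hsq, exp_neg] <;> field_simp

theorem zsMatrix_reflection_intertwining (c x : ℝ) :
    !![1, 0; 0, -1] * -zsMatrix lam p q (c - x) =
      zsMatrix (-lam) (fun x => p (c - x)) (fun x => q (c - x)) x * !![1, 0; 0, -1] := by
  ext i j
  fin_cases i <;> fin_cases j <;> simp [zsMatrix]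

end ZakharovShabat

theorem zs_discriminant_symmetries_general
    (lam : ℂ) (α : ℝ) (φm φp : ℝ → ℂ)
    (M NP NR NT : ℝ → Matrix (Fin 2) (Fin 2) ℂ)
    (hM : IsZSFund lam φm φp M)
    (hNP : IsZSFund (-lam) φp φm NP)
    (hNR : IsZSFund lam (fun x => Complex.exp (I * α) * φm x)
                        (fun x => Complex.exp (-(I * α)) * φp x) NR)
    (hNT : IsZSFund (-lam) (fun x => φm (1 - x)) (fun x => φp (1 - x)) NT) :
    (NP 1).trace = (M 1).trace ∧
    (NR 1).trace = (M 1).trace ∧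
    (NT 1).trace = (M 1).trace := by
  refine ⟨?_, ?_, ?_⟩
  · exact hM.solvesLinearODE.trace_eq_of_intertwining trace_zsMatrix hNP.solvesLinearODE
      hM.1 hNP.1 (by simp) zsMatrix_swap_intertwining 1
  · exact hM.solvesLinearODE.trace_eq_of_intertwining trace_zsMatrix hNR.solvesLinearODE
      hM.1 hNR.1 (by simp [← exp_add]) (zsMatrix_phase_intertwining α) 1
  · exact hM.solvesLinearODE.trace_eq_of_reflected_intertwining trace_zsMatrix trace_zsMatrix
      hNT.solvesLinearODE hM.1 hNT.1 1 (by simp) (zsMatrix_reflection_intertwining 1)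

theorem zs_discriminant_symmetries
    (lam : ℂ) (α : ℝ) (φm φp : ℝ → ℂ) (hm : Continuous φm) (hp : Continuous φp)
    (M NP NR NT : ℝ → Matrix (Fin 2) (Fin 2) ℂ)
    (hM : IsZSFund lam φm φp M)
    (hNP : IsZSFund (-lam) φp φm NP)
    (hNR : IsZSFund lam (fun x => Complex.exp (I * α) * φm x)
                        (fun x => Complex.exp (-(I * α)) * φp x) NR)
    (hNT : IsZSFund (-lam) (fun x => φm (1 - x)) (fun x => φp (1 - x)) NT) :
    (NP 1).trace = (M 1).trace ∧
    (NR 1).trace = (M 1).trace ∧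
    (NT 1).trace = (M 1).trace :=
  zs_discriminant_symmetries_general lam α φm φp M NP NR NT hM hNP hNR hNT
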